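/- The sum ν₂₀ + ν₀₂ of normalized second-order central moments is invariant under translation, uniform scaling, and rotation of the image. -/

import Mathlib

open MeasureTheory Real

noncomputable section

/-! Write the transformed image as `g = f ∘ S⁻¹`, where `S w = (a, b) + s R_θ w` is a similarity
of ratio `s`. Substituting `z = S w` multiplies every integral by `|det S| = s²`: the mass `μ₀₀`
scales by `s²`, the centroid is carried along by `S`, and since `|S w - S c| = s |w - c|` the
moment of inertia about the centroid, `μ₂₀ + μ₀₂`, scales by `s⁴`. Hence
`ν₂₀ + ν₀₂ = (μ₂₀ + μ₀₂) / μ₀₀²` is unchanged. -/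

/-- Geometric moment of order (p,q): m_{pq}(f) = ∫∫ x^p y^q f(x,y) dx dy. -/
def mom (f : ℝ × ℝ → ℝ) (p q : ℕ) : ℝ :=
  ∫ z : ℝ × ℝ, z.1 ^ p * z.2 ^ q * f z

/-- Centroid x-coordinate. -/
def xbar (f : ℝ × ℝ → ℝ) : ℝ := mom f 1 0 / mom f 0 0

/-- Centroid y-coordinate. -/
def ybar (f : ℝ × ℝ → ℝ) : ℝ := mom f 0 1 / mom f 0 0

/-- Central moment μ_{pq}(f) about the centroid. -/
def cmom (f : ℝ × ℝ → ℝ) (p q : ℕ) : ℝ :=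
  ∫ z : ℝ × ℝ, (z.1 - xbar f) ^ p * (z.2 - ybar f) ^ q * f z

/-- Normalized central moment ν_{pq}(f) = μ_{pq}(f) / μ₀₀(f)^{1+(p+q)/2}. -/
def nmom (f : ℝ × ℝ → ℝ) (p q : ℕ) : ℝ :=
  cmom f p q / (cmom f 0 0) ^ ((1 : ℝ) + (p + q : ℝ) / 2)

theorem integral_comp_add_linearMap {E F : Type*} [NormedAddCommGroup E] [NormedSpace ℝ E]
    [MeasurableSpace E] [BorelSpace E] [FiniteDimensional ℝ E] [NormedAddCommGroup F]
    [NormedSpace ℝ F] (μ : Measure E) [μ.IsAddHaarMeasure] {A : E →ₗ[ℝ] E}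
    (hA : LinearMap.det A ≠ 0) (c : E) (h : E → F) :
    ∫ x, h (c + A x) ∂μ = |LinearMap.det A|⁻¹ • ∫ x, h x ∂μ := by
  let e := (A.equivOfDetNeZero hA).toContinuousLinearEquiv.toHomeomorph.toMeasurableEquiv
  have hmap : Measure.map e μ = ENNReal.ofReal |(LinearMap.det A)⁻¹| • μ :=
    Measure.map_linearMap_addHaar_eq_smul_addHaar μ hA
  calc ∫ x, h (c + A x) ∂μ = ∫ y, h (c + y) ∂(Measure.map e μ) :=
        (integral_map_equiv e (fun y ↦ h (c + y))).symm
    _ = |LinearMap.det A|⁻¹ • ∫ x, h x ∂μ := by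
      rw [hmap, integral_smul_measure, ENNReal.toReal_ofReal (abs_nonneg _), abs_inv,
        integral_add_left_eq_self h c]

def rotScale (s θ : ℝ) : ℝ × ℝ →ₗ[ℝ] ℝ × ℝ :=
  Matrix.toLin (Module.Basis.finTwoProd ℝ) (Module.Basis.finTwoProd ℝ)
    !![s * cos θ, -(s * sin θ); s * sin θ, s * cos θ]

theorem det_rotScale (s θ : ℝ) : LinearMap.det (rotScale s θ) = s ^ 2 := by
  rw [rotScale, LinearMap.det_toLin, Matrix.det_fin_two_of]
  linear_combination s ^ 2 * sin_sq_add_cos_sq θ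

def similarity (a b s θ : ℝ) (w : ℝ × ℝ) : ℝ × ℝ := (a, b) + rotScale s θ w

section similarity

variable {a b s θ : ℝ}

@[simp] theorem similarity_fst (w : ℝ × ℝ) :
    (similarity a b s θ w).1 = s * cos θ * w.1 + -(s * sin θ) * w.2 + a := by
  simp [similarity, rotScale]; ring

@[simp] theorem similarity_snd (w : ℝ × ℝ) :
    (similarity a b s θ w).2 = s * sin θ * w.1 + s * cos θ * w.2 + b := by
  simp [similarity, rotScale]; ring

theorem similarity_fst_sub (w c : ℝ × ℝ) :
    (similarity a b s θ w).1 - (similarity a b s θ c).1 =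
      s * cos θ * (w.1 - c.1) + -(s * sin θ) * (w.2 - c.2) := by
  simp only [similarity_fst]; ring

theorem similarity_snd_sub (w c : ℝ × ℝ) :
    (similarity a b s θ w).2 - (similarity a b s θ c).2 =
      s * sin θ * (w.1 - c.1) + s * cos θ * (w.2 - c.2) := by
  simp only [similarity_snd]; ring

theorem similarity_inv_apply (hs : s ≠ 0) (w : ℝ × ℝ) :
    (((similarity a b s θ w).1 - a) / s * cos θ + ((similarity a b s θ w).2 - b) / s * sin θ,
      -(((similarity a b s θ w).1 - a) / s) * sin θ
        + ((similarity a b s θ w).2 - b) / s * cos θ) = w := by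
  ext <;> simp only [similarity_fst, similarity_snd] <;> field_simp
  · linear_combination s * w.1 * sin_sq_add_cos_sq θ
  · linear_combination s * w.2 * sin_sq_add_cos_sq θ

theorem integral_comp_similarity (hs : s ≠ 0) (h : ℝ × ℝ → ℝ) :
    ∫ w, h (similarity a b s θ w) = (s ^ 2)⁻¹ * ∫ z, h z := by
  have hdet : LinearMap.det (rotScale s θ) ≠ 0 := by rw [det_rotScale]; positivity
  simp only [similarity]
  rw [integral_comp_add_linearMap volume hdet, det_rotScale, abs_sq, smul_eq_mul]

end similarity

def FiniteSecondMoments (f : ℝ × ℝ → ℝ) : Prop :=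
  ∀ p q : ℕ, p + q ≤ 2 → Integrable fun z : ℝ × ℝ => z.1 ^ p * z.2 ^ q * f z

def centroid (f : ℝ × ℝ → ℝ) : ℝ × ℝ := (xbar f, ybar f)

theorem cmom_zero_zero (f : ℝ × ℝ → ℝ) : cmom f 0 0 = mom f 0 0 := by
  simp [cmom, mom]

theorem nmom_two_zero_add_nmom_zero_two (f : ℝ × ℝ → ℝ) :
    nmom f 2 0 + nmom f 0 2 = (cmom f 2 0 + cmom f 0 2) / cmom f 0 0 ^ 2 := by
  norm_num [nmom, add_div]

namespace FiniteSecondMoments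

variable {f : ℝ × ℝ → ℝ}

theorem integral_affine_mul (hf : FiniteSecondMoments f) (α β γ : ℝ) :
    ∫ w, (α * w.1 + β * w.2 + γ) * f w = α * mom f 1 0 + β * mom f 0 1 + γ * mom f 0 0 := by
  have h10 := hf 1 0 (by norm_num)
  have h01 := hf 0 1 (by norm_num)
  have h00 := hf 0 0 (by norm_num)
  have expand : (fun w : ℝ × ℝ ↦ (α * w.1 + β * w.2 + γ) * f w) = fun w ↦
      α * (w.1 ^ 1 * w.2 ^ 0 * f w) + β * (w.1 ^ 0 * w.2 ^ 1 * f w)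
        + γ * (w.1 ^ 0 * w.2 ^ 0 * f w) := by
    ext w; ring
  rw [expand, integral_add (by fun_prop) (by fun_prop), integral_add (by fun_prop) (by fun_prop),
    integral_const_mul, integral_const_mul, integral_const_mul, mom, mom, mom]

theorem integrable_sq_mul (hf : FiniteSecondMoments f) (c : ℝ × ℝ) (α β : ℝ) :
    Integrable fun w : ℝ × ℝ ↦ (α * (w.1 - c.1) + β * (w.2 - c.2)) ^ 2 * f w := by
  have h20 := hf 2 0 (by norm_num)
  have h11 := hf 1 1 (by norm_num)
  have h02 := hf 0 2 (by norm_num)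
  have h10 := hf 1 0 (by norm_num)
  have h01 := hf 0 1 (by norm_num)
  have h00 := hf 0 0 (by norm_num)
  have expand : (fun w : ℝ × ℝ ↦ (α * (w.1 - c.1) + β * (w.2 - c.2)) ^ 2 * f w) = fun w ↦
      α ^ 2 * (w.1 ^ 2 * w.2 ^ 0 * f w) + 2 * α * β * (w.1 ^ 1 * w.2 ^ 1 * f w)
        + β ^ 2 * (w.1 ^ 0 * w.2 ^ 2 * f w) - 2 * α * (α * c.1 + β * c.2) * (w.1 ^ 1 * w.2 ^ 0 * f w)
        - 2 * β * (α * c.1 + β * c.2) * (w.1 ^ 0 * w.2 ^ 1 * f w)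
        + (α * c.1 + β * c.2) ^ 2 * (w.1 ^ 0 * w.2 ^ 0 * f w) := by
    ext w; ring
  rw [expand]
  fun_prop

theorem cmom_two_zero_add_cmom_zero_two (hf : FiniteSecondMoments f) :
    cmom f 2 0 + cmom f 0 2 =
      ∫ w, ((w.1 - (centroid f).1) ^ 2 + (w.2 - (centroid f).2) ^ 2) * f w := by
  simp only [cmom, centroid, pow_zero, mul_one, one_mul, add_mul]
  exact (integral_add (by simpa [centroid] using hf.integrable_sq_mul (centroid f) 1 0)
    (by simpa [centroid] using hf.integrable_sq_mul (centroid f) 0 1)).symm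

end FiniteSecondMoments

section pullback

variable {f g : ℝ × ℝ → ℝ} {a b s θ : ℝ}

theorem integral_mul_of_comp_similarity (hs : s ≠ 0) (hg : ∀ w, g (similarity a b s θ w) = f w)
    (φ : ℝ × ℝ → ℝ) : ∫ z, φ z * g z = s ^ 2 * ∫ w, φ (similarity a b s θ w) * f w := by
  simp_rw [← hg]
  rw [integral_comp_similarity hs (fun z ↦ φ z * g z), mul_inv_cancel_left₀ (pow_ne_zero 2 hs)]

theorem mom_of_similarity (hs : s ≠ 0) (hg : ∀ w, g (similarity a b s θ w) = f w) (p q : ℕ) :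
    mom g p q = s ^ 2 * ∫ w, (similarity a b s θ w).1 ^ p * (similarity a b s θ w).2 ^ q * f w :=
  integral_mul_of_comp_similarity hs hg (fun z ↦ z.1 ^ p * z.2 ^ q)

theorem cmom_of_similarity (hs : s ≠ 0) (hg : ∀ w, g (similarity a b s θ w) = f w) (p q : ℕ) :
    cmom g p q = s ^ 2 * ∫ w, ((similarity a b s θ w).1 - xbar g) ^ p *
      ((similarity a b s θ w).2 - ybar g) ^ q * f w :=
  integral_mul_of_comp_similarity hs hg (fun z ↦ (z.1 - xbar g) ^ p * (z.2 - ybar g) ^ q)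

theorem mom_zero_zero_of_similarity (hs : s ≠ 0) (hg : ∀ w, g (similarity a b s θ w) = f w) :
    mom g 0 0 = s ^ 2 * mom f 0 0 := by
  rw [mom_of_similarity hs hg]; simp [mom]

theorem centroid_of_similarity (hs : s ≠ 0) (hg : ∀ w, g (similarity a b s θ w) = f w)
    (hf : FiniteSecondMoments f) (h0 : mom f 0 0 ≠ 0) :
    centroid g = similarity a b s θ (centroid f) := by
  have hm10 : mom g 1 0 =
      s ^ 2 * (s * cos θ * mom f 1 0 + -(s * sin θ) * mom f 0 1 + a * mom f 0 0) := by
    rw [mom_of_similarity hs hg, ← hf.integral_affine_mul]; simp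
  have hm01 : mom g 0 1 =
      s ^ 2 * (s * sin θ * mom f 1 0 + s * cos θ * mom f 0 1 + b * mom f 0 0) := by
    rw [mom_of_similarity hs hg, ← hf.integral_affine_mul]; simp
  ext <;> simp only [centroid, xbar, ybar, mom_zero_zero_of_similarity hs hg, hm10, hm01,
    similarity_fst, similarity_snd] <;> field_simp

theorem cmom_two_zero_add_cmom_zero_two_of_similarity (hs : s ≠ 0)
    (hg : ∀ w, g (similarity a b s θ w) = f w) (hf : FiniteSecondMoments f) (h0 : mom f 0 0 ≠ 0) :
    cmom g 2 0 + cmom g 0 2 = s ^ 4 * (cmom f 2 0 + cmom f 0 2) := by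
  set c := centroid f
  have hc : centroid g = similarity a b s θ c := centroid_of_similarity hs hg hf h0
  have hx : xbar g = (similarity a b s θ c).1 := congrArg Prod.fst hc
  have hy : ybar g = (similarity a b s θ c).2 := congrArg Prod.snd hc
  rw [cmom_of_similarity hs hg, cmom_of_similarity hs hg, hx, hy,
    hf.cmom_two_zero_add_cmom_zero_two]
  simp only [pow_zero, mul_one, one_mul, similarity_fst_sub, similarity_snd_sub]
  rw [← mul_add, ← integral_add (hf.integrable_sq_mul c _ _) (hf.integrable_sq_mul c _ _),
    show s ^ 4 = s ^ 2 * s ^ 2 by ring, mul_assoc]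
  congr 1
  rw [← integral_const_mul]
  congr 1 with w
  -- the rotation part of `similarity` preserves squared distances
  linear_combination s ^ 2 * ((w.1 - c.1) ^ 2 + (w.2 - c.2) ^ 2) * f w * sin_sq_add_cos_sq θ

end pullback

theorem hu_invariant_phi1_general
    (f : ℝ × ℝ → ℝ) (a b s θ : ℝ) (hs : 0 < s)
    (hμ : 0 < cmom f 0 0)
    (hmom : ∀ p q : ℕ, p + q ≤ 2 →
      Integrable fun z : ℝ × ℝ => z.1 ^ p * z.2 ^ q * f z) :
    nmom (fun z : ℝ × ℝ =>
        f (((z.1 - a) / s) * Real.cos θ + ((z.2 - b) / s) * Real.sin θ,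
           -((z.1 - a) / s) * Real.sin θ + ((z.2 - b) / s) * Real.cos θ)) 2 0
      + nmom (fun z : ℝ × ℝ =>
        f (((z.1 - a) / s) * Real.cos θ + ((z.2 - b) / s) * Real.sin θ,
           -((z.1 - a) / s) * Real.sin θ + ((z.2 - b) / s) * Real.cos θ)) 0 2
      = nmom f 2 0 + nmom f 0 2 := by
  set g : ℝ × ℝ → ℝ := fun z ↦
    f (((z.1 - a) / s) * Real.cos θ + ((z.2 - b) / s) * Real.sin θ,
      -((z.1 - a) / s) * Real.sin θ + ((z.2 - b) / s) * Real.cos θ)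
  have hg : ∀ w, g (similarity a b s θ w) = f w :=
    fun w ↦ congrArg f (similarity_inv_apply hs.ne' w)
  rw [cmom_zero_zero] at hμ
  rw [nmom_two_zero_add_nmom_zero_two, nmom_two_zero_add_nmom_zero_two,
    cmom_two_zero_add_cmom_zero_two_of_similarity hs.ne' hg hmom hμ.ne', cmom_zero_zero,
    cmom_zero_zero, mom_zero_zero_of_similarity hs.ne' hg]
  field_simp

/-- The first Hu invariant ν₂₀ + ν₀₂ is invariant under translation,
uniform scaling, and rotation. -/
theorem hu_invariant_phi1
    (f : ℝ × ℝ → ℝ) (a b s θ : ℝ) (hs : 0 < s)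
    (hf : Integrable f)
    (hμ : 0 < cmom f 0 0)
    (hmom : ∀ p q : ℕ, p + q ≤ 2 →
      Integrable fun z : ℝ × ℝ => z.1 ^ p * z.2 ^ q * f z) :
    nmom (fun z : ℝ × ℝ =>
        f (((z.1 - a) / s) * Real.cos θ + ((z.2 - b) / s) * Real.sin θ,
           -((z.1 - a) / s) * Real.sin θ + ((z.2 - b) / s) * Real.cos θ)) 2 0
      + nmom (fun z : ℝ × ℝ =>
        f (((z.1 - a) / s) * Real.cos θ + ((z.2 - b) / s) * Real.sin θ,
           -((z.1 - a) / s) * Real.sin θ + ((z.2 - b) / s) * Real.cos θ)) 0 2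
      = nmom f 2 0 + nmom f 0 2 :=
  hu_invariant_phi1_general f a b s θ hs hμ hmom
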